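/- Let P be an operad in K-modules whose underlying Σ_*-module is the commutative operad, i.e. P(r) = K (trivial Σ_r-representation) for r ≥ 1 and P(0) = 0. Then for each r, the degree-d part of the simplicial bar construction N_d(C)(r), spanned by isomorphism classes of r-trees with d levels in which every level contains at least one non-unit vertex, is isomorphic as a Σ_r-module to the degree-d part of the normalized chain complex of the simplicial set K̄(r) of chains of partitions of {1,...,r}, and these isomorphisms commute with the differentials. -/

import Mathlib

attribute [local instance] Classical.propDecidable

noncomputable section

/-- A tree with `e + 1` levels and `r` entries, as appears in the simplicial bar
construction `N_d(C)(r)` of the commutative operad `C` in degree `d = e + 1` (since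
`C(m) = K` is one dimensional, labels can be omitted and the bar construction is spanned
by such trees): `V i` is the set of vertices of level `i + 1`, each vertex of level
`i + 2` has a parent of level `i + 1`, the entries `{1, …, r}` are attached to the
top-level vertices; every vertex has at least one child (the commutative operad has
`C(0) = 0`), and there is exactly one bottom vertex (the trivial coefficient `I`). -/
structure BarTree (r e : ℕ) where
  V : ℕ → Type
  top_empty : ∀ i : ℕ, e < i → IsEmpty (V i)
  par : ∀ i : ℕ, V (i + 1) → V i
  ent : Fin r → V e
  root_subsingleton : Subsingleton (V 0)
  par_surj : ∀ i : ℕ, i < e → Function.Surjective (par i)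
  ent_surj : Function.Surjective ent

/-- Isomorphism of bar trees. -/
def BarTreeIso {r e : ℕ} (T T' : BarTree r e) : Prop :=
  ∃ f : ∀ i, T.V i ≃ T'.V i,
    (∀ (i : ℕ) (v : T.V (i + 1)), T'.par i (f (i + 1) v) = f i (T.par i v)) ∧
    (∀ x : Fin r, T'.ent x = f e (T.ent x))

/-- Iterated parent map, descending `k` levels. -/
def descend {r e : ℕ} (T : BarTree r e) : ∀ (k j : ℕ), T.V (j + k) → T.V j
  | 0, _ => id
  | (k + 1), j => fun x => descend T k j (T.par (j + k) x)

/-- The chain of partitions `λ_0 ≤ λ_1 ≤ ⋯ ≤ λ_{e+1}` of `{1, …, r}` associated to a tree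
with `e + 1` levels: the blocks of `λ_i` (for `i ≤ e`) are indexed by the vertices of
level `i + 1` — two entries lie in the same block of `λ_i` iff their attaching vertices
have the same ancestor at level `i + 1` — and `λ_{e+1}` is the partition into singletons.
(Setoids on `Fin r` carry the order *reverse* to refinement: `⊤` is the one-block
partition, `⊥` the discrete one, and chains of refinements are antitone.) -/
def toChain {r e : ℕ} (T : BarTree r e) : Fin (e + 2) → Setoid (Fin r) := fun i =>
  if h : (i : ℕ) ≤ e then
    Setoid.ker fun x : Fin r =>
      descend T (e - (i : ℕ)) (i : ℕ)
        (cast (congrArg T.V (by omega : e = (i : ℕ) + (e - (i : ℕ)))) (T.ent x))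
  else ⊥

/-- The action of `Σ_r` on bar trees: relabeling of the entries. -/
def actTree {r e : ℕ} (w : Equiv.Perm (Fin r)) (T : BarTree r e) : BarTree r e :=
  { T with
    ent := fun x => T.ent (w⁻¹ x)
    ent_surj := fun v => by
      obtain ⟨x, hx⟩ := T.ent_surj v
      exact ⟨w x, by simpa using hx⟩ }

/-- The relabeling action of `Σ_r` on partitions of `{1, …, r}`. -/
def permPart {r : ℕ} (w : Equiv.Perm (Fin r)) (q : Setoid (Fin r)) : Setoid (Fin r) :=
  Setoid.comap (⇑w⁻¹) q

/-- "Every level contains at least one non-unit vertex": in each level some vertex has a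
number of children different from one.  Under the correspondence with chains of
partitions this is exactly nondegeneracy (consecutive partitions are distinct). -/
def NonUnitLevels {r e : ℕ} (T : BarTree r e) : Prop :=
  (∀ i : ℕ, i < e → ∃ v : T.V i, ¬ (∃! w : T.V (i + 1), T.par i w = v)) ∧
  (∃ v : T.V e, ¬ (∃! x : Fin r, T.ent x = v))

/-!
A tree is determined up to isomorphism by its ancestor maps `Fin r → V i`, which are
surjective; so it is determined by their kernels, and these are exactly the partitions `λ_i`
of `toChain`. Conversely the blocks of any chain of partitions are the vertices of a tree
whose parent maps are the induced maps of quotients. Since the parent maps are surjective,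
a level contains a vertex with other than one child iff the parent map into it is not
injective, iff the kernel strictly coarsens there.
-/

open Function

namespace Setoid

variable {α β γ : Type*}

theorem ker_le_ker_comp (g : α → β) (p : β → γ) : ker g ≤ ker (p ∘ g) :=
  fun _ _ h => congrArg p h

theorem ker_comp_of_injective (g : α → β) {p : β → γ} (hp : Injective p) :
    ker (p ∘ g) = ker g :=
  ext fun _ _ => hp.eq_iff

theorem ker_lt_ker_comp_iff {g : α → β} (hg : Surjective g) {p : β → γ} :
    ker g < ker (p ∘ g) ↔ ¬ Injective p := by
  refine (ker_le_ker_comp g p).lt_iff_ne.trans (not_congr ⟨fun h a b hab => ?_, fun hp =>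
    (ker_comp_of_injective g hp).symm⟩)
  obtain ⟨x, rfl⟩ := hg a
  obtain ⟨y, rfl⟩ := hg b
  exact ker_def.1 (h ▸ ker_def.2 hab : ker g x y)

def equivOfKerEq {g : α → β} {g' : α → γ} (hg : Surjective g)
    (hg' : Surjective g') (h : ker g = ker g') : β ≃ γ :=
  (quotientKerEquivOfSurjective g hg).symm.trans <|
    (Quotient.congrRight fun _ _ => by rw [h]).trans (quotientKerEquivOfSurjective g' hg')

theorem equivOfKerEq_apply {g : α → β} {g' : α → γ} (hg : Surjective g)
    (hg' : Surjective g') (h : ker g = ker g') (x : α) :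
    equivOfKerEq hg hg' h (g x) = g' x := by
  have : (quotientKerEquivOfSurjective g hg).symm (g x) = Quotient.mk _ x :=
    (Equiv.symm_apply_eq _).2 rfl
  simp only [equivOfKerEq, Equiv.trans_apply, this]
  rfl

end Setoid

theorem Function.Surjective.exists_not_existsUnique_iff {α β : Type*} {p : α → β}
    (hp : Surjective p) : (∃ b, ¬ ∃! a, p a = b) ↔ ¬ Injective p := by
  rw [← not_forall, ← bijective_iff_existsUnique, Bijective, and_iff_left hp]

namespace BarTree

variable {r e : ℕ} (T : BarTree r e)

theorem descend_congr {k k' j : ℕ} (hk : k = k') {x : T.V (j + k)} {x' : T.V (j + k')}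
    (hx : HEq x x') : descend T k j x = descend T k' j x' := by
  subst hk; rw [eq_of_heq hx]

theorem par_congr {i i' : ℕ} (hi : i = i') {x : T.V (i + 1)} {x' : T.V (i' + 1)}
    (hx : HEq x x') : HEq (T.par i x) (T.par i' x') := by
  subst hi; rw [eq_of_heq hx]

theorem descend_succ_eq_par_descend (k j : ℕ) {x : T.V (j + (k + 1))} {x' : T.V (j + 1 + k)}
    (hx : HEq x x') : descend T (k + 1) j x = T.par j (descend T k (j + 1) x') := by
  induction k with
  | zero => exact congrArg (T.par j) (eq_of_heq hx)
  | succ k ih => exact ih (T.par_congr (by omega) hx)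

def ancestor (i : ℕ) (h : i ≤ e) (x : Fin r) : T.V i :=
  descend T (e - i) i (cast (congrArg T.V (by omega : e = i + (e - i))) (T.ent x))

theorem ancestor_self : T.ancestor e le_rfl = T.ent :=
  funext fun _ => descend_congr T (k' := 0) (by omega) (cast_heq _ _)

theorem ancestor_of_lt (i : ℕ) (h : i < e) :
    T.ancestor i h.le = T.par i ∘ T.ancestor (i + 1) h := by
  refine funext fun x => (descend_congr T (by omega : e - i = e - (i + 1) + 1)
    ((cast_heq _ _).trans (cast_heq (congrArg T.V (by omega)) _).symm)).trans ?_
  exact descend_succ_eq_par_descend T _ i ((cast_heq _ _).trans (cast_heq _ _).symm)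

theorem ancestor_unique (g : ∀ i, i ≤ e → Fin r → T.V i)
    (hg_self : ∀ x, g e le_rfl x = T.ent x)
    (hg_of_lt : ∀ i (h : i < e) x, g i h.le x = T.par i (g (i + 1) h x)) :
    ∀ i h x, g i h x = T.ancestor i h x := by
  intro i h
  induction h using Nat.decreasingInduction with
  | self => intro x; rw [hg_self, ancestor_self]
  | of_succ i h ih => intro x; rw [hg_of_lt i h, ancestor_of_lt, comp_apply, ih]

theorem ancestor_surjective (i : ℕ) (h : i ≤ e) : Surjective (T.ancestor i h) := by
  induction h using Nat.decreasingInduction with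
  | self => rw [ancestor_self]; exact T.ent_surj
  | of_succ i h ih => rw [ancestor_of_lt _ _ h]; exact (T.par_surj i h).comp ih

theorem toChain_eq_ker (i : Fin (e + 2)) {n : ℕ} (hn : i.val = n) (h : n ≤ e) :
    toChain T i = Setoid.ker (T.ancestor n h) := by
  subst hn; exact dif_pos h

theorem toChain_zero : toChain T 0 = ⊤ := by
  have := T.root_subsingleton
  rw [T.toChain_eq_ker 0 (Fin.val_zero _) (Nat.zero_le e)]
  exact top_unique fun _ _ _ => Subsingleton.elim _ _

theorem toChain_eq_bot (i : Fin (e + 2)) (h : ¬ i.val ≤ e) : toChain T i = ⊥ :=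
  dif_neg h

theorem toChain_last : toChain T (Fin.last (e + 1)) = ⊥ :=
  T.toChain_eq_bot _ (by simp)

theorem toChain_castSucc_castSucc (i : Fin e) :
    toChain T i.castSucc.castSucc = Setoid.ker (T.par i ∘ T.ancestor (i + 1) i.2) := by
  rw [T.toChain_eq_ker _ (n := i) rfl i.2.le, ancestor_of_lt _ _ i.2]

theorem toChain_castSucc_succ (i : Fin e) :
    toChain T i.castSucc.succ = Setoid.ker (T.ancestor (i + 1) i.2) :=
  T.toChain_eq_ker _ (n := i + 1) rfl i.2

-- Stated with `∘ id` so that the top level is the case `g = id` of the `Setoid.ker` lemmas.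
theorem toChain_last_castSucc : toChain T (Fin.last e).castSucc = Setoid.ker (T.ent ∘ id) := by
  rw [T.toChain_eq_ker _ (n := e) rfl le_rfl, ancestor_self]
  rfl

theorem toChain_last_succ : toChain T (Fin.last e).succ = Setoid.ker id := by
  rw [Fin.succ_last, toChain_last, Setoid.ker_eq_bot_iff.2 injective_id]

theorem toChain_antitone : Antitone (toChain T) := by
  rw [Fin.antitone_iff_succ_le, Fin.forall_fin_succ', toChain_last_succ, toChain_last_castSucc]
  refine ⟨fun i => ?_, Setoid.ker_le_ker_comp _ _⟩
  rw [toChain_castSucc_succ, toChain_castSucc_castSucc]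
  exact Setoid.ker_le_ker_comp _ _

theorem toChain_castSucc_succ_lt_iff (i : Fin e) :
    toChain T i.castSucc.succ < toChain T i.castSucc.castSucc ↔ ¬ Injective (T.par i) := by
  rw [toChain_castSucc_succ, toChain_castSucc_castSucc]
  exact Setoid.ker_lt_ker_comp_iff (T.ancestor_surjective _ i.2)

theorem toChain_last_succ_lt_iff :
    toChain T (Fin.last e).succ < toChain T (Fin.last e).castSucc ↔ ¬ Injective T.ent := by
  rw [toChain_last_succ, toChain_last_castSucc]
  exact Setoid.ker_lt_ker_comp_iff surjective_id

theorem nonUnitLevels_iff_strictAnti : NonUnitLevels T ↔ StrictAnti (toChain T) := by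
  rw [Fin.strictAnti_iff_succ_lt, Fin.forall_fin_succ', toChain_last_succ_lt_iff, NonUnitLevels,
    T.ent_surj.exists_not_existsUnique_iff, Fin.forall_iff]
  refine and_congr (forall₂_congr fun i hi => ?_) Iff.rfl
  exact (T.par_surj i hi).exists_not_existsUnique_iff.trans
    (T.toChain_castSucc_succ_lt_iff ⟨i, hi⟩).symm

section Iso

variable {T} {T' : BarTree r e}

theorem ancestor_of_iso (f : ∀ i, T.V i ≃ T'.V i)
    (hpar : ∀ i v, T'.par i (f (i + 1) v) = f i (T.par i v))
    (hent : ∀ x, T'.ent x = f e (T.ent x)) (i : ℕ) (h : i ≤ e) (x : Fin r) :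
    T'.ancestor i h x = f i (T.ancestor i h x) := by
  refine (T'.ancestor_unique (fun i h x => f i (T.ancestor i h x)) (fun x => ?_)
    (fun i h x => ?_) i h x).symm
  · rw [ancestor_self, hent]
  · rw [ancestor_of_lt _ _ h, comp_apply, hpar]

theorem toChain_eq_of_iso (hT : BarTreeIso T T') : toChain T = toChain T' := by
  obtain ⟨f, hpar, hent⟩ := hT
  funext i
  by_cases h : i.val ≤ e
  · rw [T.toChain_eq_ker i rfl h, T'.toChain_eq_ker i rfl h,
      funext (ancestor_of_iso f hpar hent i h)]
    exact (Setoid.ker_comp_of_injective _ (f i).injective).symm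
  · rw [T.toChain_eq_bot i h, T'.toChain_eq_bot i h]

theorem iso_of_toChain_eq (hT : toChain T = toChain T') : BarTreeIso T T' := by
  have hker (i : ℕ) (hi : i ≤ e) :
      Setoid.ker (T.ancestor i hi) = Setoid.ker (T'.ancestor i hi) := by
    simpa only [T.toChain_eq_ker ⟨i, by omega⟩ rfl hi, T'.toChain_eq_ker ⟨i, by omega⟩ rfl hi]
      using congrFun hT ⟨i, by omega⟩
  let f (i : ℕ) : T.V i ≃ T'.V i :=
    if hi : i ≤ e then
      Setoid.equivOfKerEq (T.ancestor_surjective i hi) (T'.ancestor_surjective i hi) (hker i hi)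
    else
      have := T.top_empty i (by omega)
      have := T'.top_empty i (by omega)
      Equiv.equivOfIsEmpty _ _
  have hf (i : ℕ) (hi : i ≤ e) (x : Fin r) : f i (T.ancestor i hi x) = T'.ancestor i hi x := by
    simp only [f, dif_pos hi]
    exact Setoid.equivOfKerEq_apply _ _ _ x
  refine ⟨f, fun i v => ?_, fun x => ?_⟩
  · by_cases hi : i < e
    · obtain ⟨x, rfl⟩ := T.ancestor_surjective (i + 1) hi v
      simpa only [ancestor_of_lt _ _ hi, comp_apply, hf] using (hf i hi.le x).symm
    · exact (T.top_empty (i + 1) (by omega)).elim v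
  · simpa only [ancestor_self] using (hf e le_rfl x).symm

theorem barTreeIso_iff_toChain_eq : BarTreeIso T T' ↔ toChain T = toChain T' :=
  ⟨toChain_eq_of_iso, iso_of_toChain_eq⟩

end Iso

section OfChain

variable (c : Fin (e + 2) → Setoid (Fin r))

/-- The vertices of level `i + 1` are the blocks of `c i`; the factor `PLift (i ≤ e)` makes the
levels above the top one empty. -/
def ofChain (hc : Antitone c) (h0 : c 0 = ⊤) : BarTree r e where
  V i := Quotient (c (Fin.clamp i (e + 1))) × PLift (i ≤ e)
  top_empty i h := ⟨fun v => absurd v.2.down (by omega)⟩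
  par i v :=
    (Quotient.map id (fun _ _ hab => hc (by simp [Fin.le_def, Fin.clamp]; omega) hab) v.1,
      ⟨Nat.le_of_succ_le v.2.down⟩)
  ent x := (Quotient.mk _ x, ⟨le_rfl⟩)
  root_subsingleton := by
    have hclamp : Fin.clamp 0 (e + 1) = 0 := Fin.ext (Nat.zero_min _)
    refine ⟨fun ⟨a, _⟩ ⟨b, _⟩ => Prod.ext ?_ (Subsingleton.elim _ _)⟩
    induction a, b using Quotient.inductionOn₂ with
    | h x y => exact Quotient.sound (by rw [hclamp, h0]; trivial)
  par_surj i hi := by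
    rintro ⟨q, -⟩
    induction q using Quotient.inductionOn with
    | h x => exact ⟨(Quotient.mk _ x, ⟨hi⟩), rfl⟩
  ent_surj := by
    rintro ⟨q, -⟩
    induction q using Quotient.inductionOn with
    | h x => exact ⟨x, rfl⟩

theorem ancestor_ofChain (hc : Antitone c) (h0 : c 0 = ⊤) (i : ℕ) (h : i ≤ e) (x : Fin r) :
    (ofChain c hc h0).ancestor i h x = (Quotient.mk _ x, ⟨h⟩) :=
  ((ofChain c hc h0).ancestor_unique (fun _ h x => (Quotient.mk _ x, ⟨h⟩)) (fun _ => rfl)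
    (fun _ _ _ => rfl) i h x).symm

theorem toChain_ofChain (hc : Antitone c) (h0 : c 0 = ⊤) (hlast : c (Fin.last (e + 1)) = ⊥) :
    toChain (ofChain c hc h0) = c := by
  funext i
  by_cases h : i.val ≤ e
  · have hclamp : Fin.clamp i (e + 1) = i := Fin.ext (min_eq_left (by omega))
    ext x y
    rw [toChain_eq_ker _ i rfl h, Setoid.ker_def, ancestor_ofChain, ancestor_ofChain]
    exact ⟨fun hxy => hclamp ▸ Quotient.exact (congrArg Prod.fst hxy),
      fun hxy => Prod.ext (Quotient.sound (show c (Fin.clamp i (e + 1)) x y by rwa [hclamp]))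
        rfl⟩
  · obtain rfl : i = Fin.last (e + 1) := Fin.ext (by simp; omega)
    rw [toChain_last, hlast]

end OfChain

theorem ancestor_actTree (w : Equiv.Perm (Fin r)) (i : ℕ) (h : i ≤ e) (x : Fin r) :
    (actTree w T).ancestor i h x = T.ancestor i h (w⁻¹ x) := by
  refine ((actTree w T).ancestor_unique (fun i h x => T.ancestor i h (w⁻¹ x)) (fun x => ?_)
    (fun i h x => ?_) i h x).symm
  · rw [ancestor_self]; rfl
  · rw [ancestor_of_lt _ _ h]; rfl

theorem toChain_actTree (w : Equiv.Perm (Fin r)) :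
    toChain (actTree w T) = fun i => permPart w (toChain T i) := by
  funext i
  by_cases h : i.val ≤ e
  · rw [toChain_eq_ker _ i rfl h, toChain_eq_ker T i rfl h, funext (ancestor_actTree T w i h)]
    rfl
  · rw [toChain_eq_bot _ i h, T.toChain_eq_bot i h]
    ext x y
    exact (w⁻¹).injective.eq_iff.symm

end BarTree

/-- For the operad `C` with `C(r) = K` (trivial `Σ_r`-representation)
for `r ≥ 1` and `C(0) = 0` (the commutative operad), the degree-`d` part of the
simplicial bar construction `N_d(C)(r)` — spanned by isomorphism classes of `r`-trees
with `d` levels all of which contain a non-unit vertex — is isomorphic, compatibly with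
the `Σ_r`-actions and the differentials, to the degree-`d` part of the normalized chain
complex of the simplicial set `K̄(r)` of chains of partitions of `{1, …, r}` — spanned by
the nondegenerate `d`-simplices, i.e. the strict chains `λ_0 < ⋯ < λ_d` from the
one-block partition to the discrete one.  Explicitly, the assignment `tree ↦ chain of
partitions` induces a bijection from isomorphism classes of `r`-trees with `d = e + 1`
levels onto the `d`-simplices of `K̄(r)`, it is `Σ_r`-equivariant, and it matches trees
with only non-unit levels with nondegenerate simplices; the induced `Σ_r`-equivariant
isomorphisms of the free `K`-modules on these bases identify the two chain complexes. -/
theorem bar_construction_commutative_operad_is_partition_complex (r e : ℕ) :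
    -- `toChain` lands in the set of `(e+1)`-simplices of `K̄(r)`
    (∀ T : BarTree r e,
      Antitone (toChain T) ∧ toChain T 0 = ⊤ ∧ toChain T (Fin.last (e + 1)) = ⊥) ∧
    -- it induces an injection on isomorphism classes of trees …
    (∀ T T' : BarTree r e, BarTreeIso T T' ↔ toChain T = toChain T') ∧
    -- … and a surjection onto the simplices of `K̄(r)`
    (∀ c : Fin (e + 2) → Setoid (Fin r),
      Antitone c → c 0 = ⊤ → c (Fin.last (e + 1)) = ⊥ →
        ∃ T : BarTree r e, toChain T = c) ∧
    -- it is `Σ_r`-equivariant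
    (∀ (w : Equiv.Perm (Fin r)) (T : BarTree r e),
      toChain (actTree w T) = fun i => permPart w (toChain T i)) ∧
    -- trees with only non-unit levels correspond to nondegenerate simplices
    (∀ T : BarTree r e, NonUnitLevels T ↔ StrictAnti (toChain T)) :=
  ⟨fun T => ⟨T.toChain_antitone, T.toChain_zero, T.toChain_last⟩,
    fun _ _ => BarTree.barTreeIso_iff_toChain_eq,
    fun c hc h0 hlast => ⟨BarTree.ofChain c hc h0, BarTree.toChain_ofChain c hc h0 hlast⟩,
    fun w T => T.toChain_actTree w,
    fun T => T.nonUnitLevels_iff_strictAnti⟩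

end
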